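/- Conversely, if f : F_p^n → ℂ satisfies ‖f‖_∞ ≤ 1 and ‖f‖_{U^{d+1}} = 1, then f = e^{2πi P} for some non-classical polynomial P : F_p^n → ℝ/ℤ of degree ≤ d. -/

import Mathlib

open scoped BigOperators

noncomputable section

/-- The circle group `𝕋 = ℝ/ℤ`. -/
abbrev 𝕋 : Type := AddCircle (1 : ℝ)

/-- The character `e(x) = e^{2πix}` on `𝕋`, valued in `ℂ`. -/
def ee (x : 𝕋) : ℂ := (AddCircle.toCircle x : ℂ)

/-- The average `E_{x ∈ α}[f(x)]` of a complex-valued function on a finite type. -/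
def cavg {α : Type*} [Fintype α] (f : α → ℂ) : ℂ := (∑ x, f x) / (Fintype.card α : ℂ)

/-- The average of a real-valued function on a finite type. -/
def ravg {α : Type*} [Fintype α] (f : α → ℝ) : ℝ := (∑ x, f x) / (Fintype.card α : ℝ)

/-- Multiplicative derivative `Δ_h f (x) = f(x+h) conj (f x)`. -/
def mDeriv {G : Type*} [Add G] (h : G) (f : G → ℂ) : G → ℂ :=
  fun x => f (x + h) * (starRingEnd ℂ) (f x)

/-- `E_{h_1,…,h_d,x}[(Δ_{h_1} ⋯ Δ_{h_d} f)(x)]`. -/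
def gowersAvg {G : Type*} [AddCommGroup G] [Fintype G] : ℕ → (G → ℂ) → ℂ
  | 0, f => cavg f
  | d + 1, f => cavg fun h => gowersAvg d (mDeriv h f)

/-- The Gowers norm `‖f‖_{U^d} = |E_{h_1,…,h_d,x}[(Δ_{h_1} ⋯ Δ_{h_d} f)(x)]|^{1/2^d}`. -/
def gowersNorm {G : Type*} [AddCommGroup G] [Fintype G] (d : ℕ) (f : G → ℂ) : ℝ :=
  ‖gowersAvg d f‖ ^ ((1 : ℝ) / 2 ^ d)

/-- Additive derivative `D_h P (x) = P(x+h) - P(x)`. -/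
def aDeriv {G M : Type*} [Add G] [Sub M] (h : G) (P : G → M) : G → M :=
  fun x => P (x + h) - P x

/-- Iterated additive derivative `D_{h_1} ⋯ D_{h_k} P`. -/
def iterADeriv {G M : Type*} [AddCommGroup G] [AddCommGroup M] :
    {k : ℕ} → (Fin k → G) → (G → M) → (G → M)
  | 0, _, P => P
  | _ + 1, h, P => aDeriv (h 0) (iterADeriv (Fin.tail h) P)

/-- `P` is a (non-classical) polynomial of degree ≤ `d`:
all `(d+1)`-fold additive derivatives vanish identically. -/
def IsPolyDeg {G M : Type*} [AddCommGroup G] [AddCommGroup M] (d : ℕ) (P : G → M) : Prop :=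
  ∀ (h : Fin (d + 1) → G) (x : G), iterADeriv h P x = 0

/-- `P` has degree exactly `d`. -/
def ExactDeg {G M : Type*} [AddCommGroup G] [AddCommGroup M] (d : ℕ) (P : G → M) : Prop :=
  IsPolyDeg d P ∧ ∀ d' < d, ¬ IsPolyDeg d' P

/-- The degree of a polynomial: the least `d` with `IsPolyDeg d P`. -/
def polyDeg {G M : Type*} [AddCommGroup G] [AddCommGroup M] (P : G → M) : ℕ :=
  sInf {d | IsPolyDeg d P}

/-- `P` has `d`-rank at most `r`: `P = Γ(Q_1,…,Q_r)` with the `Q_i` of degree ≤ `d-1`. -/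
def HasRankLE {G : Type*} [AddCommGroup G] (d : ℕ) (P : G → 𝕋) (r : ℕ) : Prop :=
  ∃ (Q : Fin r → G → 𝕋) (Γ : (Fin r → 𝕋) → 𝕋),
    (∀ i, IsPolyDeg (d - 1) (Q i)) ∧ ∀ x, P x = Γ fun i => Q i x

/-- The `d`-rank of `P`, in `ℕ∞` (`⊤` if no finite decomposition exists;
for `d = 1` this is `⊤` exactly when `P` is non-constant). -/
def rankd {G : Type*} [AddCommGroup G] (d : ℕ) (P : G → 𝕋) : ℕ∞ :=
  sInf {r : ℕ∞ | ∃ m : ℕ, r = m ∧ HasRankLE d P m}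

/-- `P` has depth exactly `k` (shift zero): values in `U_{k+1} = (1/p^{k+1})ℤ/ℤ` but not all
in `U_k`. -/
def ExactDepth {G : Type*} (p k : ℕ) (P : G → 𝕋) : Prop :=
  (∀ x, (p ^ (k + 1)) • P x = 0) ∧ ¬ (∀ x, (p ^ k) • P x = 0)

/-- Application of a linear form `L = (w_t)_t` to a tuple of points of `F_p^n`:
`(x_t)_t ↦ ∑_t w_t x_t`. -/
def formApply {p : ℕ} {ι : Type*} [Fintype ι] {n : ℕ} (L : ι → ZMod p)
    (x : ι → Fin n → ZMod p) : Fin n → ZMod p := ∑ t, L t • x t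

/-- The `(d,k)`-dependency set of a system of forms `L`: the tuples
`(λ_j) ∈ [0, p^{k+1}-1]^m` with `∑_j λ_j P(L_j(x)) ≡ 0` for every non-classical polynomial `P`
of degree `d` and depth `k` (over every `F_p^n`). -/
def DepSet (p k d : ℕ) {ι μ : Type*} [Fintype ι] [Fintype μ]
    (L : μ → ι → ZMod p) : Set (μ → ℕ) :=
  {lam | (∀ j, lam j < p ^ (k + 1)) ∧
    ∀ (n : ℕ) (P : (Fin n → ZMod p) → 𝕋), ExactDeg d P → ExactDepth p k P →
      ∀ x : ι → Fin n → ZMod p, (∑ j, lam j • P (formApply (L j) x)) = 0}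

/-- `b_1,…,b_m ∈ 𝕋^κ` are consistent with the forms `L` with respect to degree data `dd`
and depth data `kk`. -/
def ConsistentWith (p : ℕ) {ι κ : Type*} [Fintype ι] [Fintype κ] {m : ℕ}
    (L : Fin m → ι → ZMod p) (dd kk : κ → ℕ) (b : Fin m → κ → 𝕋) : Prop :=
  ∀ i : κ, (∀ j, (p ^ (kk i + 1)) • b j i = 0) ∧
    ∀ lam ∈ DepSet p (kk i) (dd i) L, (∑ j, lam j • b j i) = 0

/-- The polynomial factor defined by `P_1,…,P_C` with depths `k_1,…,k_C` has rank greater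
than `r`: every integer combination `∑ λ_i P_i`, with the `λ_i` not all divisible by the
respective `p^{k_i+1}`, has `D`-rank > `r` where `D = max_i deg(λ_i P_i)`. -/
def FactorRankGT (p : ℕ) {G : Type*} [AddCommGroup G] {C : ℕ}
    (P : Fin C → G → 𝕋) (k : Fin C → ℕ) (r : ℕ) : Prop :=
  ∀ lam : Fin C → ℤ, (∃ i, ¬ ((p : ℤ) ^ (k i + 1) ∣ lam i)) →
    (r : ℕ∞) < rankd (Finset.univ.sup fun i => polyDeg fun x => lam i • P i x)
      (fun x => ∑ i, lam i • P i x)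

/-- Cauchy–Schwarz complexity ≤ `d`: for each `i`, the remaining forms can be partitioned into
`d+1` classes, with `L_i` outside the linear span of each class. -/
def CSComplexityLE (p : ℕ) {m : ℕ} {ι : Type*} [Fintype ι] (d : ℕ)
    (L : Fin m → ι → ZMod p) : Prop :=
  ∀ i, ∃ c : Fin m → Fin (d + 1), ∀ t,
    L i ∉ Submodule.span (ZMod p) {v | ∃ j, j ≠ i ∧ c j = t ∧ v = L j}


/-! An average of complex numbers of modulus at most one that itself has modulus one forces all of
them to equal it. Applied level by level to `gowersAvg`, this makes every
iterated multiplicative derivative `Δ_{h_1} ⋯ Δ_{h_{d+1}} f (x)` equal to the same unimodular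
constant `c`. Taking all `h_i = 0` gives `|f x| ^ 2 ^ (d+1) = |c| = 1`, so `f = e(P)` for some
`P : F_p^n → 𝕋`; then `e(D_{h_1} ⋯ D_{h_{d+1}} P (x)) = c = e(D_0 ⋯ D_0 P (x)) = e(0)`. -/

/-- `iterMDeriv h f = Δ_{h_{k-1}} ⋯ Δ_{h_0} f`: `h 0` is applied first, as `gowersAvg` unfolds. -/
def iterMDeriv {G : Type*} [Add G] : {k : ℕ} → (Fin k → G) → (G → ℂ) → (G → ℂ)
  | 0, _, f => f
  | _ + 1, h, f => iterMDeriv (Fin.tail h) (mDeriv (h 0) f)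

section Averages

variable {α : Type*} [Fintype α] {f : α → ℂ}

lemma norm_cavg_le (hf : ∀ x, ‖f x‖ ≤ 1) : ‖cavg f‖ ≤ 1 := by
  rw [cavg, norm_div, Complex.norm_natCast]
  refine div_le_one_of_le₀ ?_ (Nat.cast_nonneg _)
  calc ‖∑ x, f x‖ ≤ ∑ x, ‖f x‖ := norm_sum_le _ _
    _ ≤ ∑ _x : α, (1 : ℝ) := Finset.sum_le_sum fun x _ => hf x
    _ = Fintype.card α := by simp

lemma eq_cavg_of_norm_cavg_eq_one (hf : ∀ x, ‖f x‖ ≤ 1) (h1 : ‖cavg f‖ = 1) (x : α) :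
    f x = cavg f := by
  have hcard : (Fintype.card α : ℂ) ≠ 0 := Nat.cast_ne_zero.2 (Fintype.card_pos_iff.2 ⟨x⟩).ne'
  have hsum : ∑ y, f y = Fintype.card α * cavg f := by rw [cavg, mul_div_cancel₀ _ hcard]
  set c := cavg f
  have hc : Complex.normSq c = 1 := by rw [Complex.normSq_eq_norm_sq, h1, one_pow]
  -- the variance `∑ |f y - c|²` is at most `∑ (2 - 2 Re (f y c̄)) = 0`
  have hvar : ∑ y, Complex.normSq (f y - c) ≤ 0 :=
    calc ∑ y, Complex.normSq (f y - c)
        ≤ ∑ y, (2 - 2 * (f y * (starRingEnd ℂ) c).re) := by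
          refine Finset.sum_le_sum fun y _ => ?_
          have : Complex.normSq (f y) ≤ 1 := by
            rw [Complex.normSq_eq_norm_sq]; nlinarith [hf y, norm_nonneg (f y)]
          rw [Complex.normSq_sub, hc]; linarith
      _ = 2 * Fintype.card α - 2 * ((∑ y, f y) * (starRingEnd ℂ) c).re := by
          rw [Finset.sum_sub_distrib, ← Finset.mul_sum, ← Complex.re_sum, ← Finset.sum_mul]
          simp [mul_comm]
      _ = 0 := by
          rw [hsum, mul_assoc, Complex.mul_conj, hc]; simp
  have hx := (Finset.sum_eq_zero_iff_of_nonneg fun y _ => Complex.normSq_nonneg (f y - c)).1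
    (le_antisymm hvar (Finset.sum_nonneg fun y _ => Complex.normSq_nonneg _)) x
      (Finset.mem_univ x)
  exact sub_eq_zero.1 (Complex.normSq_eq_zero.1 hx)

end Averages

section MultiplicativeDerivatives

variable {G : Type*} [AddCommGroup G]

lemma norm_mDeriv_le {f : G → ℂ} (hf : ∀ x, ‖f x‖ ≤ 1) (h x : G) : ‖mDeriv h f x‖ ≤ 1 := by
  rw [mDeriv, norm_mul, Complex.norm_conj]
  exact mul_le_one₀ (hf _) (norm_nonneg _) (hf x)

lemma norm_iterMDeriv_zero :
    ∀ (k : ℕ) (f : G → ℂ) (x : G), ‖iterMDeriv (fun _ : Fin k => (0 : G)) f x‖ = ‖f x‖ ^ 2 ^ k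
  | 0, _, _ => by simp [iterMDeriv]
  | k + 1, f, x => by
    change ‖iterMDeriv (fun _ : Fin k => (0 : G)) (mDeriv 0 f) x‖ = _
    rw [norm_iterMDeriv_zero k, mDeriv, add_zero, norm_mul, Complex.norm_conj, ← sq, ← pow_mul,
      ← pow_succ']

variable [Fintype G]

lemma norm_gowersAvg_le {f : G → ℂ} (hf : ∀ x, ‖f x‖ ≤ 1) : ∀ k : ℕ, ‖gowersAvg k f‖ ≤ 1
  | 0 => norm_cavg_le hf
  | k + 1 => norm_cavg_le fun h => norm_gowersAvg_le (norm_mDeriv_le hf h) k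

lemma iterMDeriv_eq_gowersAvg :
    ∀ {k : ℕ} {f : G → ℂ}, (∀ x, ‖f x‖ ≤ 1) → ‖gowersAvg k f‖ = 1 →
      ∀ (h : Fin k → G) (x : G), iterMDeriv h f x = gowersAvg k f
  | 0, _, hf, h1, _, x => eq_cavg_of_norm_cavg_eq_one hf h1 x
  | k + 1, f, hf, h1, h, x => by
    have hconst := eq_cavg_of_norm_cavg_eq_one
      (fun g => norm_gowersAvg_le (norm_mDeriv_le hf g) k) h1 (h 0)
    rw [gowersAvg, ← hconst] at h1 ⊢
    exact iterMDeriv_eq_gowersAvg (norm_mDeriv_le hf (h 0)) h1 (Fin.tail h) x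

lemma gowersNorm_eq_one_iff {d : ℕ} {f : G → ℂ} : gowersNorm d f = 1 ↔ ‖gowersAvg d f‖ = 1 := by
  rw [gowersNorm, ← Real.rpow_left_inj (norm_nonneg _) zero_le_one (z := 1 / 2 ^ d) (by positivity),
    Real.one_rpow]

end MultiplicativeDerivatives

section Characters

lemma ee_add (a b : 𝕋) : ee (a + b) = ee a * ee b := by
  rw [ee, ee, ee, AddCircle.toCircle_add, Circle.coe_mul]

lemma conj_ee (a : 𝕋) : (starRingEnd ℂ) (ee a) = ee (-a) := by
  rw [ee, ee, AddCircle.toCircle_neg, Circle.coe_inv_eq_conj]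

lemma ee_injective : Function.Injective ee :=
  Circle.coe_injective.comp (AddCircle.injective_toCircle one_ne_zero)

lemma exists_ee_eq_of_norm_eq_one {z : ℂ} (hz : ‖z‖ = 1) : ∃ t : 𝕋, ee t = z := by
  obtain ⟨t, ht⟩ := (AddCircle.homeomorphCircle one_ne_zero).surjective
    ⟨z, mem_sphere_zero_iff_norm.2 hz⟩
  exact ⟨t, by rw [ee, ← AddCircle.homeomorphCircle_apply one_ne_zero, ht]⟩

variable {G : Type*} [AddCommGroup G]

lemma mDeriv_ee (h : G) (P : G → 𝕋) :
    mDeriv h (fun y => ee (P y)) = fun x => ee (aDeriv h P x) := by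
  funext x
  rw [mDeriv, aDeriv, sub_eq_add_neg, ee_add, conj_ee]

lemma aDeriv_comm {M : Type*} [AddCommGroup M] (a b : G) (P : G → M) :
    aDeriv a (aDeriv b P) = aDeriv b (aDeriv a P) := by
  funext x
  simp only [aDeriv, add_right_comm x b a]
  abel

lemma iterADeriv_aDeriv {M : Type*} [AddCommGroup M] :
    ∀ {k : ℕ} (h : Fin k → G) (g : G) (P : G → M),
      iterADeriv h (aDeriv g P) = aDeriv g (iterADeriv h P)
  | 0, _, _, _ => rfl
  | _ + 1, h, g, P => by
    rw [iterADeriv, iterADeriv, iterADeriv_aDeriv (Fin.tail h) g P, aDeriv_comm]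

lemma iterMDeriv_ee :
    ∀ {k : ℕ} (h : Fin k → G) (P : G → 𝕋) (x : G),
      iterMDeriv h (fun y => ee (P y)) x = ee (iterADeriv h P x)
  | 0, _, _, _ => rfl
  | _ + 1, h, P, x => by
    rw [iterMDeriv, mDeriv_ee, iterMDeriv_ee (Fin.tail h), iterADeriv, ← iterADeriv_aDeriv]

end Characters

/-- If `f : F_p^n → ℂ` satisfies `‖f‖_∞ ≤ 1` and `‖f‖_{U^{d+1}} = 1`, then
`f = e^{2πiP}` for some non-classical polynomial `P` of degree ≤ d. -/
theorem poly_of_gowersNorm_eq_one (p : ℕ) [Fact p.Prime] (n d : ℕ)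
    (f : (Fin n → ZMod p) → ℂ) (hf : ∀ x, ‖f x‖ ≤ 1)
    (hU : gowersNorm (d + 1) f = 1) :
    ∃ P : (Fin n → ZMod p) → 𝕋, IsPolyDeg d P ∧ ∀ x, f x = ee (P x) := by
  have hnorm := gowersNorm_eq_one_iff.1 hU
  have hconst := iterMDeriv_eq_gowersAvg hf hnorm
  have hunit : ∀ x, ‖f x‖ = 1 := fun x => by
    rw [← pow_eq_one_iff_of_nonneg (norm_nonneg _) (by positivity : 2 ^ (d + 1) ≠ 0),
      ← norm_iterMDeriv_zero, hconst, hnorm]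
  choose P hP using fun x => exists_ee_eq_of_norm_eq_one (hunit x)
  have hfP : f = fun x => ee (P x) := funext fun x => (hP x).symm
  refine ⟨P, fun h x => ?_, fun x => (hP x).symm⟩
  have hsame := (hconst h x).trans (hconst (fun _ => 0) x).symm
  rw [hfP, iterMDeriv_ee, iterMDeriv_ee] at hsame
  simpa [iterADeriv, aDeriv] using ee_injective hsame

end
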